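/- arXiv:2308.09989 — 2 statements merged into one kernel-verified Lean document; each statement's English description precedes it below -/
import Mathlib

section
/- If an extension H/G of valued abelian groups is pseudo-complete, then H/G is maximal; in particular, every pseudo-complete valued abelian group is maximal. -/
/-! If `K/G` is immediate and `a ∈ K \ G`, immediacy improves every approximation `a - g`
(`g ∈ G`), so the values `v (a - g)` have no maximum. Choosing approximations indexed by a
well-ordered cofinal set of these values gives a pseudo-Cauchy sequence in `G` that has the
pseudo-limit `a` but none in `G`. A pseudo-complete group is maximal because it is
pseudo-complete in each extension, via its image. -/

universe u

/-- `v : G → Γ` is a valuation making the abelian group `G` a valued abelian group: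
`Γ` is a linear order with greatest element `⊤` (denoted `∞` in the paper), `v` is
surjective, `v g = ⊤` iff `g = 0`, and `v (g - h) ≥ min (v g) (v h)`. -/
structure IsValuedGroup {G Γ : Type*} [AddCommGroup G] [LinearOrder Γ] [OrderTop Γ]
    (v : G → Γ) : Prop where
  surjective : Function.Surjective v
  eq_top_iff : ∀ g : G, v g = ⊤ ↔ g = 0
  min_le_sub : ∀ g h : G, min (v g) (v h) ≤ v (g - h)

/-- A sequence `a` indexed by a linearly ordered set `I` is pseudo-Cauchy if eventually
`v (a i - a j) < v (a j - a k)` for `i < j < k`. -/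
def IsPseudoCauchy {G Γ I : Type*} [AddCommGroup G] [LinearOrder Γ] [LinearOrder I]
    (v : G → Γ) (a : I → G) : Prop :=
  ∃ i₀ : I, ∀ i j k : I, i₀ ≤ i → i < j → j < k → v (a i - a j) < v (a j - a k)

/-- `x` is a pseudo-limit of the sequence `a` if eventually
`v (a i - x) = v (a i - a j)` for `i < j`. -/
def IsPseudoLimit {G Γ I : Type*} [AddCommGroup G] [LinearOrder Γ] [LinearOrder I]
    (v : G → Γ) (a : I → G) (x : G) : Prop :=
  ∃ i₀ : I, ∀ i j : I, i₀ ≤ i → i < j → v (a i - x) = v (a i - a j)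

/-- For subsets `G ⊆ K` of an ambient valued abelian group `(H, v)`, `K` is an immediate
extension of `G` (both regarded as valued groups via restriction of `v`): the nonzero
values of `K` and of `G` coincide, and for every value `γ` of `G` and every `k ∈ K` with
`v k ≥ γ` there is `g ∈ G` with `v g ≥ γ` and `v (k - g) > γ` (i.e. the inclusion induces
isomorphisms of ribs). -/
def IsImmediateIn {H Γ : Type*} [AddCommGroup H] [LinearOrder Γ] [OrderTop Γ]
    (v : H → Γ) (G K : Set H) : Prop :=
  (∀ k ∈ K, k ≠ 0 → ∃ g ∈ G, g ≠ 0 ∧ v g = v k) ∧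
  (∀ γ : Γ, (∃ g ∈ G, g ≠ 0 ∧ v g = γ) →
    ∀ k ∈ K, γ ≤ v k → ∃ g ∈ G, γ ≤ v g ∧ γ < v (k - g))

/-- Relative pseudo-completeness: every pseudo-Cauchy sequence with entries in `G` which
has a pseudo-limit in `K` already has a pseudo-limit in `G` (all inside the ambient valued
abelian group `(H, v)`). -/
def IsPseudoCompleteIn {H Γ : Type u} [AddCommGroup H] [LinearOrder Γ]
    (v : H → Γ) (G K : Set H) : Prop :=
  ∀ (I : Type u) [LinearOrder I] [WellFoundedLT I] [NoMaxOrder I] [Nonempty I]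
    (a : I → H), (∀ i, a i ∈ G) → IsPseudoCauchy v a →
    (∃ x ∈ K, IsPseudoLimit v a x) → ∃ x ∈ G, IsPseudoLimit v a x

/-- A valued abelian group is pseudo-complete if every pseudo-Cauchy sequence in it
admits a pseudo-limit in it. -/
def IsPseudoComplete {G Γ : Type u} [AddCommGroup G] [LinearOrder Γ] (v : G → Γ) : Prop :=
  ∀ (I : Type u) [LinearOrder I] [WellFoundedLT I] [NoMaxOrder I] [Nonempty I]
    (a : I → G), IsPseudoCauchy v a → ∃ x : G, IsPseudoLimit v a x

/-- The extension `H/G` is maximal: there is no subgroup `K` with `G ⊊ K ⊆ H` such that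
`K/G` is immediate. -/
def IsMaximalIn {H Γ : Type u} [AddCommGroup H] [LinearOrder Γ] [OrderTop Γ]
    (v : H → Γ) (G : AddSubgroup H) : Prop :=
  ∀ K : AddSubgroup H, G < K → ¬ IsImmediateIn v (G : Set H) (K : Set H)

/-- A valued abelian group `(G, v)` is maximal if it admits no proper immediate extension:
whenever `(H, w)` is a valued abelian group (with the same value set, as immediate extensions
preserve the skeleton) and `f : G →+ H` is an injective valuation-preserving homomorphism
making `H` an immediate extension of the image of `G`, then `f` is surjective. -/
def IsMaximal {G Γ : Type u} [AddCommGroup G] [LinearOrder Γ] [OrderTop Γ]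
    (v : G → Γ) : Prop :=
  ∀ (H : Type u) (_ : AddCommGroup H) (w : H → Γ), IsValuedGroup w →
    ∀ f : G →+ H, Function.Injective f → (∀ g : G, w (f g) = v g) →
      IsImmediateIn w (Set.range f) Set.univ → Function.Surjective f

namespace IsValuedGroup

variable {G Γ : Type*} [AddCommGroup G] [LinearOrder Γ] [OrderTop Γ] {v : G → Γ}

theorem map_zero (hv : IsValuedGroup v) : v 0 = ⊤ := (hv.eq_top_iff 0).mpr rfl

theorem map_neg (hv : IsValuedGroup v) (g : G) : v (-g) = v g := by
  have le_neg (x : G) : v x ≤ v (-x) := by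
    simpa [hv.map_zero] using hv.min_le_sub 0 x
  exact le_antisymm (by simpa using le_neg (-g)) (le_neg g)

theorem map_sub_comm (hv : IsValuedGroup v) (g h : G) : v (g - h) = v (h - g) := by
  rw [← hv.map_neg, neg_sub]

theorem min_le_add (hv : IsValuedGroup v) (g h : G) : min (v g) (v h) ≤ v (g + h) := by
  simpa [hv.map_neg] using hv.min_le_sub g (-h)

theorem map_sub_of_lt (hv : IsValuedGroup v) {g h : G} (hgh : v g < v h) : v (g - h) = v g := by
  refine le_antisymm ?_ ((min_eq_left hgh.le).symm.le.trans (hv.min_le_sub g h))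
  by_contra! hlt
  have := hv.min_le_add (g - h) h
  rw [sub_add_cancel] at this
  exact (lt_min hlt hgh).not_ge this

theorem map_sub_eq_of_lt (hv : IsValuedGroup v) {a x y : G} (hxy : v (a - x) < v (a - y)) :
    v (x - y) = v (a - x) := by
  rw [← hv.map_sub_of_lt hxy, hv.map_sub_comm x y]
  congr 1
  abel

end IsValuedGroup

theorem Set.exists_wellFoundedLT_isCofinalFor {α : Type*} [LinearOrder α] (S : Set α) :
    ∃ W ⊆ S, IsCofinalFor S W ∧ WellFoundedLT W := by
  let r : α → α → Prop := WellOrderingRel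
  -- the records of `S` along the well-order `r`
  refine ⟨{a ∈ S | ∀ b ∈ S, r b a → b < a}, fun a ha => ha.1, ?_, ?_⟩
  · intro s hs
    obtain ⟨m, ⟨hmS, hsm⟩, hmin⟩ :=
      WellOrderingRel.isWellOrder.wf.has_min {γ ∈ S | s ≤ γ} ⟨s, hs, le_rfl⟩
    refine ⟨m, ⟨hmS, fun b hb hbm => ?_⟩, hsm⟩
    by_contra! hmb
    exact hmin b ⟨hb, hsm.trans hmb⟩ hbm
  · refine ⟨Subrelation.wf (r := fun x y => r x.1 y.1) ?_
      (InvImage.wf _ WellOrderingRel.isWellOrder.wf)⟩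
    intro x y hxy
    rcases trichotomous_of r x.1 y.1 with h | h | h
    · exact h
    · exact absurd (Subtype.ext h) hxy.ne
    · exact absurd (x.2.2 y.1 y.2.1 h) (not_lt.mpr hxy.le)

theorem IsImmediateIn.exists_lt_map_sub {H Γ : Type*} [AddCommGroup H] [LinearOrder Γ]
    [OrderTop Γ] {v : H → Γ} {G K : Set H} (him : IsImmediateIn v G K) {k : H} (hk : k ∈ K)
    (hk0 : k ≠ 0) : ∃ g ∈ G, v k < v (k - g) := by
  obtain ⟨g₀, hg₀, hg₀0, hvg₀⟩ := him.1 k hk hk0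
  obtain ⟨g, hg, -, hlt⟩ := him.2 (v k) ⟨g₀, hg₀, hg₀0, hvg₀⟩ k hk le_rfl
  exact ⟨g, hg, hlt⟩

section StrictMonoApprox

variable {H Γ I : Type*} [AddCommGroup H] [LinearOrder Γ] [OrderTop Γ] {v : H → Γ}
  [LinearOrder I] {a : H} {b : I → H}

theorem IsValuedGroup.isPseudoCauchy_of_strictMono [Nonempty I] (hv : IsValuedGroup v)
    (hb : StrictMono fun i => v (a - b i)) : IsPseudoCauchy v b := by
  refine ⟨Classical.arbitrary I, fun i j k _ hij hjk => ?_⟩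
  rw [hv.map_sub_eq_of_lt (hb hij), hv.map_sub_eq_of_lt (hb hjk)]
  exact hb hij

theorem IsValuedGroup.isPseudoLimit_of_strictMono [Nonempty I] (hv : IsValuedGroup v)
    (hb : StrictMono fun i => v (a - b i)) : IsPseudoLimit v b a := by
  refine ⟨Classical.arbitrary I, fun i j _ hij => ?_⟩
  rw [hv.map_sub_eq_of_lt (hb hij), hv.map_sub_comm]

theorem IsValuedGroup.not_isPseudoLimit_of_strictMono [NoMaxOrder I] (hv : IsValuedGroup v)
    (hb : StrictMono fun i => v (a - b i)) {x : H} {i₁ : I} (hx : v (a - x) < v (a - b i₁)) :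
    ¬ IsPseudoLimit v b x := by
  rintro ⟨i₀, hlim⟩
  set i := max i₀ i₁
  obtain ⟨j, hij⟩ := exists_gt i
  have hbx : v (b i - x) = v (a - b i) := by
    rw [hlim i j (le_max_left _ _) hij, hv.map_sub_eq_of_lt (hb hij)]
  have hle : v (a - b i) ≤ v (a - x) := by
    have := hv.min_le_add (a - b i) (b i - x)
    rwa [hbx, min_self, sub_add_sub_cancel] at this
  exact (hx.trans_le ((hb.monotone (le_max_right i₀ i₁)).trans hle)).false

end StrictMonoApprox

variable {H Γ : Type u} [AddCommGroup H] [LinearOrder Γ] {v : H → Γ}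

theorem IsPseudoCompleteIn.exists_forall_map_sub_le [OrderTop Γ] (hv : IsValuedGroup v)
    {G K : Set H} (hpc : IsPseudoCompleteIn v G K) (hG : G.Nonempty) {a : H} (ha : a ∈ K) :
    ∃ g ∈ G, ∀ g' ∈ G, v (a - g') ≤ v (a - g) := by
  by_contra! hbetter
  obtain ⟨W, hWS, hWcof, hWwf⟩ :=
    Set.exists_wellFoundedLT_isCofinalFor ((fun g => v (a - g)) '' G)
  have hW : ∀ x ∈ G, ∃ i : W, v (a - x) < i := by
    intro x hx
    obtain ⟨g, hg, hlt⟩ := hbetter x hx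
    obtain ⟨i, hiW, hgi⟩ := hWcof ⟨g, hg, rfl⟩
    exact ⟨⟨i, hiW⟩, hlt.trans_le hgi⟩
  have : NoMaxOrder W := ⟨fun i => by
    obtain ⟨x, hx, hxi⟩ := hWS i.2
    obtain ⟨j, hj⟩ := hW x hx
    exact ⟨j, by rw [← Subtype.coe_lt_coe, ← hxi]; exact hj⟩⟩
  have : Nonempty W := by
    obtain ⟨g, hg⟩ := hG
    exact (hW g hg).nonempty
  have hWG : ∀ i : W, ∃ g ∈ G, v (a - g) = i := fun i => hWS i.2
  choose b hbG hbv using hWG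
  have hb : StrictMono fun i => v (a - b i) := fun i j hij => by
    simp only [hbv]
    exact hij
  obtain ⟨x, hxG, hx⟩ := hpc W b hbG (hv.isPseudoCauchy_of_strictMono hb)
    ⟨a, ha, hv.isPseudoLimit_of_strictMono hb⟩
  obtain ⟨i, hi⟩ := hW x hxG
  exact hv.not_isPseudoLimit_of_strictMono hb (i₁ := i) (by rwa [hbv]) hx

theorem IsPseudoCompleteIn.isMaximalIn [OrderTop Γ] (hv : IsValuedGroup v) {G : AddSubgroup H}
    (hpc : IsPseudoCompleteIn v G Set.univ) : IsMaximalIn v G := by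
  intro K hGK him
  obtain ⟨a, haK, haG⟩ := SetLike.exists_of_lt hGK
  obtain ⟨g, hg, hbest⟩ := hpc.exists_forall_map_sub_le hv ⟨0, G.zero_mem⟩ (Set.mem_univ a)
  have hag : a - g ≠ 0 := sub_ne_zero.mpr fun h => haG (h ▸ hg)
  obtain ⟨g₁, hg₁, hlt⟩ := him.exists_lt_map_sub (K.sub_mem haK (hGK.le hg)) hag
  rw [sub_sub] at hlt
  exact (hbest _ (G.add_mem hg hg₁)).not_gt hlt

theorem IsPseudoComplete.isPseudoCompleteIn_range {G : Type u} [AddCommGroup G] {w : G → Γ}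
    (hpc : IsPseudoComplete w) (f : G →+ H) (hf : ∀ g, v (f g) = w g) (K : Set H) :
    IsPseudoCompleteIn v (Set.range f) K := by
  intro I _ _ _ _ a ha ⟨i₀, hcauchy⟩ _
  choose c hc using ha
  have hvf (x y : G) : v (f x - f y) = w (x - y) := by rw [← hf, map_sub]
  obtain ⟨x, j₀, hx⟩ := hpc I c ⟨i₀, fun i j k h₀ hij hjk => by
    simpa only [← hc, hvf] using hcauchy i j k h₀ hij hjk⟩
  refine ⟨f x, ⟨x, rfl⟩, j₀, fun i j h₀ hij => ?_⟩
  rw [← hc, ← hc, hvf, hvf, hx i j h₀ hij]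

theorem IsPseudoComplete.isMaximal [OrderTop Γ] {G : Type u} [AddCommGroup G] {w : G → Γ}
    (hpc : IsPseudoComplete w) : IsMaximal w := by
  intro H _ v hv f _ hf him
  have hmax := (hpc.isPseudoCompleteIn_range f hf Set.univ).isMaximalIn (G := f.range) hv
  by_contra hsurj
  refine hmax ⊤ (lt_top_iff_ne_top.mpr fun h => hsurj (AddMonoidHom.range_eq_top.mp h)) ?_
  simpa using him

/-- If an extension `H/G` of valued abelian groups is pseudo-complete,
then `H/G` is maximal; in particular, every pseudo-complete valued abelian group
is maximal. -/
theorem maximal_of_pseudoComplete :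
    (∀ (H Γ : Type u) (_ : AddCommGroup H) (_ : LinearOrder Γ) (_ : OrderTop Γ)
       (v : H → Γ), IsValuedGroup v → ∀ G : AddSubgroup H,
         IsPseudoCompleteIn v (G : Set H) Set.univ → IsMaximalIn v G) ∧
    (∀ (G Γ : Type u) (_ : AddCommGroup G) (_ : LinearOrder Γ) (_ : OrderTop Γ)
       (v : G → Γ), IsValuedGroup v → IsPseudoComplete v → IsMaximal v) :=
  ⟨fun _ _ _ _ _ _ hv _ hpc => hpc.isMaximalIn hv,
    fun _ _ _ _ _ _ _ hpc => hpc.isMaximal⟩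
end

section
/- Let (G, v) be a ℤ-invariant pseudo-complete valued abelian group and let m > 0. Then the induced valued group modulo m, (G/mG, val^m), is pseudo-complete: for every sequence (a_i)_{i∈I} in G (I well-ordered with no greatest element) such that eventually V_{a_i − a_j}^m ⊋ V_{a_j − a_k}^m for all i < j < k (i.e. (a_i mod mG) is pseudo-Cauchy for val^m), there exists b ∈ G such that eventually V_{a_i − b}^m = V_{a_i − a_j}^m for all i < j (i.e. b mod mG is a pseudo-limit for val^m). -/
universe u

/-- For a valued abelian group `(G, v)`, `m ∈ ℕ` and `a ∈ G`, the set
`V_a^m = {x ∈ G : v (a + m • g) < v x for all g ∈ G}`, i.e. the largest convex subgroup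
of `G` not meeting `a + mG` (and `∅` if `a ∈ mG`). -/
def Vm {G Γ : Type*} [AddCommGroup G] [LinearOrder Γ] (v : G → Γ) (m : ℕ) (a : G) :
    Set G :=
  {x : G | ∀ g : G, v (a + m • g) < v x}

/-!
Write `μ x` for the largest value of `v` on the coset `x + mG`; it exists because a coset
without a largest value would carry a well-ordered, strictly increasing family of values,
which by ℤ-invariance lifts to a pseudo-Cauchy sequence whose pseudo-limit beats them all.
Then `V_x^m = {z | μ x < v z}`, so the hypothesis says that `μ (a i - a j) = γ i` for a
strictly increasing `γ`. By well-founded recursion the `a i` are moved inside their cosets to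
`a i + m • g i` with `v`-distances exactly `γ i`: at a successor one corrects against the
predecessor, at a limit against a pseudo-limit of the sequence built so far. A pseudo-limit of
the lifted sequence is a pseudo-limit modulo `m`.
-/

section Ultrametric

variable {G Γ : Type*} [AddCommGroup G] [LinearOrder Γ]

structure IsUltrametric (f : G → Γ) : Prop where
  map_neg : ∀ x, f (-x) = f x
  min_le_map_add : ∀ x y, min (f x) (f y) ≤ f (x + y)

namespace IsUltrametric

variable {f : G → Γ}

theorem map_add_eq_of_lt (hf : IsUltrametric f) {x y : G} (h : f x < f y) :
    f (x + y) = f x := by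
  refine le_antisymm ?_ (by simpa [h.le] using hf.min_le_map_add x y)
  have hx := hf.min_le_map_add (x + y) (-y)
  rw [add_neg_cancel_right, hf.map_neg] at hx
  exact not_lt.1 fun hlt => (lt_min hlt h).not_ge hx

theorem map_sub_eq_of_lt (hf : IsUltrametric f) {x y : G} (h : f x < f y) :
    f (x - y) = f x := by
  rw [sub_eq_add_neg]
  exact hf.map_add_eq_of_lt (by rwa [hf.map_neg])

theorem exists_strictMono_map_sub_eq (hf : IsUltrametric f) {J : Type*} [LinearOrder J]
    [NoMaxOrder J] {a : J → G}
    (ha : ∀ i j k, i < j → j < k → f (a i - a j) < f (a j - a k)) :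
    ∃ γ : J → Γ, StrictMono γ ∧ ∀ j k, j < k → f (a j - a k) = γ j := by
  have hsame : ∀ i j k, i < j → j < k → f (a i - a k) = f (a i - a j) := by
    intro i j k hij hjk
    rw [← sub_add_sub_cancel (a i) (a j) (a k)]
    exact hf.map_add_eq_of_lt (ha i j k hij hjk)
  choose s hs using fun j : J => exists_gt j
  have hγ : ∀ j k, j < k → f (a j - a k) = f (a j - a (s j)) := by
    intro j k hjk
    rcases lt_trichotomy k (s j) with h | rfl | h
    · exact (hsame j k (s j) hjk h).symm
    · rfl
    · exact hsame j (s j) k (hs j) h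
  refine ⟨fun j => f (a j - a (s j)), fun j k hjk => ?_, hγ⟩
  simpa only [hγ j k hjk] using ha j k (s k) hjk (hs k)

theorem map_sub_eq_of_eventually (hf : IsUltrametric f) {J : Type*} [LinearOrder J]
    {b : J → G} {γ : J → Γ} (hγ : StrictMono γ) (hb : ∀ j k, j < k → f (b j - b k) = γ j)
    {z : G} {j₀ : J} (hz : ∀ j, j₀ ≤ j → f (b j - z) = γ j) (j : J) :
    f (b j - z) = γ j := by
  rcases le_or_gt j₀ j with h | h
  · exact hz j h
  · rw [← sub_add_sub_cancel (b j) (b j₀) z,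
      hf.map_add_eq_of_lt (by rw [hb j j₀ h, hz j₀ le_rfl]; exact hγ h), hb j j₀ h]

end IsUltrametric

theorem IsValuedGroup.isUltrametric [OrderTop Γ] {v : G → Γ} (hv : IsValuedGroup v) :
    IsUltrametric v := by
  have hle : ∀ x, v x ≤ v (-x) := fun x => by
    simpa [(hv.eq_top_iff 0).2 rfl] using hv.min_le_sub 0 x
  have hneg : ∀ x, v (-x) = v x := fun x => le_antisymm (by simpa using hle (-x)) (hle x)
  exact ⟨hneg, fun x y => by simpa [hneg] using hv.min_le_sub x (-y)⟩

end Ultrametric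

section PseudoCauchy

variable {G Γ : Type u} [AddCommGroup G] [LinearOrder Γ] {v : G → Γ}

theorem isPseudoCauchy_of_map_sub_eq {J : Type*} [LinearOrder J] [Nonempty J] {b : J → G}
    {γ : J → Γ} (hγ : StrictMono γ) (hb : ∀ j k, j < k → v (b j - b k) = γ j) :
    IsPseudoCauchy v b :=
  ⟨Classical.arbitrary J, fun i j k _ hij hjk => by rw [hb i j hij, hb j k hjk]; exact hγ hij⟩

theorem exists_eventually_map_sub_eq (hpc : IsPseudoComplete v) {J : Type u} [LinearOrder J]
    [WellFoundedLT J] [NoMaxOrder J] [Nonempty J] {b : J → G} {γ : J → Γ} (hγ : StrictMono γ)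
    (hb : ∀ j k, j < k → v (b j - b k) = γ j) :
    ∃ c : G, ∃ j₀ : J, ∀ j, j₀ ≤ j → v (b j - c) = γ j := by
  obtain ⟨c, j₀, hc⟩ := hpc J b (isPseudoCauchy_of_map_sub_eq hγ hb)
  refine ⟨c, j₀, fun j hj => ?_⟩
  obtain ⟨k, hk⟩ := exists_gt j
  rw [hc j k hj hk, hb j k hk]

end PseudoCauchy

theorem exists_isCofinal_wellFoundedLT (α : Type*) [LinearOrder α] :
    ∃ s : Set α, IsCofinal s ∧ WellFoundedLT s := by
  refine ⟨_, isCofinal_setOfPred_imp_lt WellOrderingRel, ⟨Subrelation.wf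
    (r := InvImage WellOrderingRel Subtype.val) (fun {x y} hxy => ?_)
    (InvImage.wf _ IsWellFounded.wf)⟩⟩
  -- on the records of `WellOrderingRel`, `<` is contained in `WellOrderingRel`
  rcases trichotomous_of WellOrderingRel x.1 y.1 with h | h | h
  · exact h
  · exact absurd (Subtype.ext h) hxy.ne
  · exact absurd (x.2 y.1 h) (not_lt.2 hxy.le)

theorem WellFoundedLT.exists_fun_forall_of_exists {J β : Type*} [LT J] [WellFoundedLT J]
    [Nonempty β] (P : (k : J) → ((j : J) → j < k → β) → β → Prop) :
    ∃ g : J → β, ∀ k, (∃ x, P k (fun j _ => g j) x) → P k (fun j _ => g j) (g k) := by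
  classical
  let F : (k : J) → ((j : J) → j < k → β) → β := fun k f =>
    if h : ∃ x, P k f x then h.choose else Classical.arbitrary β
  refine ⟨WellFoundedLT.fix F, fun k hk => ?_⟩
  rw [WellFoundedLT.fix_eq]
  simp only [F, dif_pos hk]
  exact hk.choose_spec

section CosetMax

variable {G Γ : Type u} [AddCommGroup G] [LinearOrder Γ]

def IsMaxOnCosets (v : G → Γ) (m : ℕ) (μ : G → Γ) : Prop :=
  ∀ x, IsGreatest (Set.range fun g : G => v (x + m • g)) (μ x)

variable {v : G → Γ} {m : ℕ}

theorem exists_isMaxOnCosets [OrderTop Γ] (hv : IsValuedGroup v)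
    (hinv : ∀ (g : G) (n : ℕ), 0 < n → v (n • g) = v g) (hpc : IsPseudoComplete v)
    (hm : 0 < m) : ∃ μ : G → Γ, IsMaxOnCosets v m μ := by
  refine Classical.axiomOfChoice fun x => ?_
  set S := Set.range fun g : G => v (x + m • g)
  by_contra! hS
  have : NoMaxOrder S := ⟨fun c => by
    obtain ⟨d, hdS, hcd⟩ : ∃ d ∈ S, c.1 < d := by
      simpa [IsGreatest, upperBounds, c.2] using hS c
    exact ⟨⟨d, hdS⟩, hcd⟩⟩
  have : Nonempty S := ⟨⟨_, 0, rfl⟩⟩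
  obtain ⟨t, ht, _⟩ := exists_isCofinal_wellFoundedLT S
  have : Nonempty t := ht.nonempty.to_subtype
  have : NoMaxOrder t := ⟨fun c => by
    obtain ⟨d, hd⟩ := exists_gt c.1
    obtain ⟨e, he, hde⟩ := ht d
    exact ⟨⟨e, he⟩, hd.trans_le hde⟩⟩
  have hmem : ∀ c : t, ∃ g, v (x + m • g) = c.1.1 := fun c => c.1.2
  choose w hw using hmem
  have hw_sub : ∀ c d : t, c < d → v (w c - w d) = c.1.1 := by
    intro c d hcd
    rw [← hinv _ m hm, smul_sub, ← add_sub_add_left_eq_sub _ _ x,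
      hv.isUltrametric.map_sub_eq_of_lt (by rw [hw, hw]; exact hcd), hw]
  obtain ⟨y, c₀, hy⟩ := exists_eventually_map_sub_eq hpc
    ((Subtype.strictMono_coe _).comp (Subtype.strictMono_coe _)) hw_sub
  obtain ⟨c₁, hc₁, hyc₁⟩ := ht ⟨_, y, rfl⟩
  obtain ⟨d, hd⟩ := exists_gt (max c₀ ⟨c₁, hc₁⟩)
  have hdy : d.1.1 ≤ v (x + m • y) := by
    have h := hv.min_le_sub (x + m • w d) (m • (w d - y))
    rwa [hw, hinv _ m hm, hy d ((le_max_left _ _).trans hd.le), Function.comp_apply, min_self,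
      show x + m • w d - m • (w d - y) = x + m • y by rw [smul_sub]; abel] at h
  exact (hdy.trans hyc₁).not_gt ((le_max_right c₀ ⟨c₁, hc₁⟩).trans_lt hd)

namespace IsMaxOnCosets

variable {μ : G → Γ}

theorem le (hμ : IsMaxOnCosets v m μ) (x g : G) : v (x + m • g) ≤ μ x :=
  (hμ x).2 ⟨g, rfl⟩

theorem le_self (hμ : IsMaxOnCosets v m μ) (x : G) : v x ≤ μ x := by
  simpa using hμ.le x 0

theorem exists_eq (hμ : IsMaxOnCosets v m μ) (x : G) : ∃ g, v (x + m • g) = μ x :=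
  (hμ x).1

theorem Vm_eq (hμ : IsMaxOnCosets v m μ) (x : G) : Vm v m x = {z | μ x < v z} := by
  ext z
  obtain ⟨g, hg⟩ := hμ.exists_eq x
  exact ⟨fun hz => hg ▸ hz g, fun hz g => (hμ.le x g).trans_lt hz⟩

theorem lt_of_Vm_ssubset (hμ : IsMaxOnCosets v m μ) {x y : G} (h : Vm v m y ⊂ Vm v m x) :
    μ x < μ y := by
  obtain ⟨z, hzx, hzy⟩ := Set.exists_of_ssubset h
  rw [hμ.Vm_eq, Set.mem_ofPred_eq] at hzx hzy
  exact hzx.trans_le (not_lt.1 hzy)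

theorem map_add_nsmul (hμ : IsMaxOnCosets v m μ) (x g : G) : μ (x + m • g) = μ x := by
  obtain ⟨g₁, hg₁⟩ := hμ.exists_eq x
  obtain ⟨g₂, hg₂⟩ := hμ.exists_eq (x + m • g)
  refine le_antisymm ?_ ?_
  · simpa only [← hg₂, smul_add, add_assoc] using hμ.le x (g + g₂)
  · simpa only [← hg₁, smul_sub, add_add_sub_cancel] using hμ.le (x + m • g) (g₁ - g)

theorem isUltrametric [OrderTop Γ] (hμ : IsMaxOnCosets v m μ) (hv : IsValuedGroup v) :
    IsUltrametric μ := by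
  have hle : ∀ x, μ x ≤ μ (-x) := fun x => by
    obtain ⟨g, hg⟩ := hμ.exists_eq x
    have h := hμ.le (-x) (-g)
    rwa [smul_neg, ← neg_add, hv.isUltrametric.map_neg, hg] at h
  refine ⟨fun x => le_antisymm (by simpa using hle (-x)) (hle x), fun x y => ?_⟩
  obtain ⟨g, hg⟩ := hμ.exists_eq x
  obtain ⟨h, hh⟩ := hμ.exists_eq y
  calc min (μ x) (μ y) = min (v (x + m • g)) (v (y + m • h)) := by rw [hg, hh]
    _ ≤ v (x + m • g + (y + m • h)) := hv.isUltrametric.min_le_map_add _ _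
    _ ≤ μ (x + y) := by simpa only [smul_add, add_add_add_comm] using hμ.le (x + y) (g + h)

end IsMaxOnCosets

section Lift

variable [OrderTop Γ] {μ : G → Γ}

theorem exists_map_sub_add_nsmul_eq (hv : IsValuedGroup v) (hpc : IsPseudoComplete v)
    (hμ : IsMaxOnCosets v m μ) {K : Type u} [LinearOrder K] [WellFoundedLT K] {b : K → G}
    {γ : K → Γ} (hγ : StrictMono γ) (hb : ∀ j k, j < k → v (b j - b k) = γ j) {y : G}
    (hy : ∀ j, μ (b j - y) = γ j) : ∃ x, ∀ j, v (b j - (y + m • x)) = γ j := by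
  have hvu := hv.isUltrametric
  rcases isEmpty_or_nonempty K with hK | hK
  · exact ⟨0, fun j => isEmptyElim j⟩
  suffices ∃ x, ∃ j₀ : K, ∀ j, j₀ ≤ j → v (b j - (y + m • x)) = γ j by
    obtain ⟨x, j₀, hx⟩ := this
    exact ⟨x, hvu.map_sub_eq_of_eventually hγ hb hx⟩
  by_cases hmax : ∃ j₀ : K, IsMax j₀
  · obtain ⟨j₀, hj₀⟩ := hmax
    obtain ⟨g, hg⟩ := hμ.exists_eq (b j₀ - y)
    refine ⟨-g, j₀, fun j hj => ?_⟩
    rw [← hj₀.eq_of_le hj, smul_neg, sub_add_eq_sub_sub, sub_neg_eq_add, hg, hy]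
  · have : NoMaxOrder K := ⟨fun j => not_isMax_iff.1 fun h => hmax ⟨j, h⟩⟩
    obtain ⟨c, j₀, hc⟩ := exists_eventually_map_sub_eq hpc hγ hb
    have hlt : ∀ j, γ j < μ (c - y) := by
      intro j
      obtain ⟨k, hk⟩ := exists_gt (max j j₀)
      have hck : γ k ≤ μ (c - b k) := by
        rw [← hc k ((le_max_right _ _).trans hk.le), ← neg_sub, hvu.map_neg]
        exact hμ.le_self _
      calc γ j < γ k := hγ ((le_max_left _ _).trans_lt hk)
        _ ≤ min (μ (c - b k)) (μ (b k - y)) := le_min hck (hy k).ge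
        _ ≤ μ (c - y) := by
          simpa only [sub_add_sub_cancel] using
            (hμ.isUltrametric hv).min_le_map_add (c - b k) (b k - y)
    obtain ⟨g, hg⟩ := hμ.exists_eq (c - y)
    refine ⟨-g, j₀, fun j hj => ?_⟩
    have hsplit : b j - (y + m • -g) = (b j - c) + (c - y + m • g) := by rw [smul_neg]; abel
    rw [hsplit, hvu.map_add_eq_of_lt (by rw [hc j hj, hg]; exact hlt j), hc j hj]

theorem exists_lift_map_sub_eq (hv : IsValuedGroup v) (hpc : IsPseudoComplete v)
    (hμ : IsMaxOnCosets v m μ) {J : Type u} [LinearOrder J] [WellFoundedLT J] {a : J → G}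
    {γ : J → Γ} (hγ : StrictMono γ) (ha : ∀ j k, j < k → μ (a j - a k) = γ j) :
    ∃ g : J → G, ∀ j k, j < k → v (a j + m • g j - (a k + m • g k)) = γ j := by
  obtain ⟨g, hg⟩ := WellFoundedLT.exists_fun_forall_of_exists (β := G)
    fun k f x => ∀ j (hj : j < k), v (a j + m • f j hj - (a k + m • x)) = γ j
  refine ⟨g, fun j k hjk => ?_⟩
  induction k using WellFoundedLT.induction generalizing j with
  | _ k ih =>
  refine hg k ?_ j hjk
  obtain ⟨x, hx⟩ := exists_map_sub_add_nsmul_eq hv hpc hμ (K := Set.Iio k)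
    (b := fun j => a j + m • g j) (hγ.comp (Subtype.strictMono_coe _))
    (fun j j' h => ih j' j'.2 j h) (y := a k)
    (fun j => by rw [add_sub_right_comm, hμ.map_add_nsmul, ha j k j.2]; rfl)
  exact ⟨x, fun j hj => hx ⟨j, hj⟩⟩

theorem map_sub_eq_of_lift (hv : IsValuedGroup v) (hμ : IsMaxOnCosets v m μ) {J : Type*}
    [LinearOrder J] [NoMaxOrder J] {a g : J → G} {γ : J → Γ} (hγ : StrictMono γ)
    (ha : ∀ j k, j < k → μ (a j - a k) = γ j) {c : G} {j₀ : J}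
    (hc : ∀ j, j₀ ≤ j → v (a j + m • g j - c) = γ j) {j : J} (hj : j₀ ≤ j) :
    μ (a j - c) = γ j := by
  obtain ⟨k, hk⟩ := exists_gt j
  have hck : γ k ≤ μ (a k - c) := by
    simpa only [hc k (hj.trans hk.le), sub_add_eq_add_sub] using hμ.le (a k - c) (g k)
  rw [← sub_add_sub_cancel (a j) (a k) c, (hμ.isUltrametric hv).map_add_eq_of_lt
    (by rw [ha j k hk]; exact (hγ hk).trans_le hck), ha j k hk]

end Lift

end CosetMax

/-- Let `(G, v)` be a ℤ-invariant pseudo-complete valued abelian group and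
`m > 0`. Then the induced valued group modulo `m`, `(G/mG, val^m)`, is pseudo-complete:
for every sequence `(a_i)` in `G` such that eventually `V^m_{a_i - a_j} ⊋ V^m_{a_j - a_k}`
for `i < j < k` (i.e. `(a_i mod mG)` is pseudo-Cauchy for `val^m`), there exists `b ∈ G`
such that eventually `V^m_{a_i - b} = V^m_{a_i - a_j}` for `i < j` (i.e. `b mod mG` is a
pseudo-limit for `val^m`). -/
theorem quotient_pseudoComplete_of_pseudoComplete {G Γ : Type u} [AddCommGroup G]
    [LinearOrder Γ] [OrderTop Γ] (v : G → Γ) (hv : IsValuedGroup v)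
    (hinv : ∀ (g : G) (n : ℕ), 0 < n → v (n • g) = v g)
    (hpc : IsPseudoComplete v) (m : ℕ) (hm : 0 < m)
    (I : Type u) [LinearOrder I] [WellFoundedLT I] [NoMaxOrder I] [Nonempty I]
    (a : I → G)
    (hc : ∃ i₀ : I, ∀ i j k : I, i₀ ≤ i → i < j → j < k →
      Vm v m (a j - a k) ⊂ Vm v m (a i - a j)) :
    ∃ b : G, ∃ i₀ : I, ∀ i j : I, i₀ ≤ i → i < j →
      Vm v m (a i - b) = Vm v m (a i - a j) := by
  obtain ⟨i₀, hc⟩ := hc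
  obtain ⟨μ, hμ⟩ := exists_isMaxOnCosets hv hinv hpc hm
  obtain ⟨γ, hγ, ha⟩ := (hμ.isUltrametric hv).exists_strictMono_map_sub_eq
    (a := fun i : Set.Ici i₀ => a i)
    fun i j k hij hjk => hμ.lt_of_Vm_ssubset (hc i j k i.2 hij hjk)
  obtain ⟨g, hg⟩ := exists_lift_map_sub_eq hv hpc hμ hγ ha
  obtain ⟨b, j₀, hb⟩ := exists_eventually_map_sub_eq hpc hγ hg
  refine ⟨b, j₀, fun i j hi hij => ?_⟩
  have hi₀ : i₀ ≤ i := j₀.2.trans hi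
  rw [hμ.Vm_eq, hμ.Vm_eq, map_sub_eq_of_lift hv hμ hγ ha hb (j := ⟨i, hi₀⟩) hi,
    ha ⟨i, hi₀⟩ ⟨j, hi₀.trans hij.le⟩ hij]
end
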